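/- arXiv:1010.3455 — 2 statements merged into one kernel-verified Lean document; each statement's English description precedes it below -/
import Mathlib

section
/- Let K be a field and M a finite J-trivial monoid. Let E denote the commutative monoid on the set of idempotents E(M) of M with product e ⋆ f := (e·f)^ω. Then the K-linear map Φ : MonoidAlgebra K M → MonoidAlgebra K E determined on the basis by Φ(x) = x^ω for x ∈ M is a surjective algebra homomorphism whose kernel is the Jacobson radical of MonoidAlgebra K M; in particular, Φ induces an algebra isomorphism (MonoidAlgebra K M)/rad ≅ MonoidAlgebra K E. -/
/-!
In a `J`-trivial monoid an idempotent `e` with `e ≤_J x` absorbs `x` on both sides. Hence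
`(x y)^ω` and `(x^ω y^ω)^ω` absorb each other and coincide, so `x ↦ x^ω` is a monoid morphism
onto `E` fixing `E`, and `Φ` is a surjective algebra morphism.

If `Φ a = 0`, the coefficient of `y` in `a * y` is
`∑_{x y = y} a_x = ∑_{e y = y} (Φ a)_e = 0`, because `x y = y ↔ x^ω y = y`. So left
multiplication by `a` moves every basis element strictly down the `J`-order, `a` is nilpotent,
and the nil ideal `ker Φ` lies in the radical.

Conversely the radical of `K[E]` is zero, so `Φ` kills the radical of `K[M]`: for `b ≠ 0` and
`e` maximal in the support of `b` for the order `e ≤ f ↔ e ⋆ f = e`, the character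
`f ↦ [e ⋆ f = e]` of `E` sends `b` to `b_e ≠ 0`.
-/
def leJ {M : Type*} [Monoid M] (x y : M) : Prop := ∃ u v : M, x = u * y * v

def JTrivial (M : Type*) [Monoid M] : Prop :=
  ∀ x y : M, {z : M | ∃ u v : M, z = u * x * v} = {z : M | ∃ u v : M, z = u * y * v} → x = y

open Classical

noncomputable def omegaPow {M : Type*} [Monoid M] (x : M) : M :=
  if h : ∃ e : M, IsIdempotentElem e ∧ ∃ n : ℕ, 0 < n ∧ e = x ^ n then h.choose else 1

lemma omegaPow_idem {M : Type*} [Monoid M] (x : M) : IsIdempotentElem (omegaPow x) := by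
  unfold omegaPow
  split_ifs with h
  · exact h.choose_spec.1
  · exact IsIdempotentElem.one

open Function Finset

section OmegaPow

variable {M : Type*} [Monoid M]

lemma exists_isIdempotentElem_pow [Finite M] (x : M) :
    ∃ e : M, IsIdempotentElem e ∧ ∃ n : ℕ, 0 < n ∧ e = x ^ n := by
  obtain ⟨m, n, hne, hmn⟩ := Finite.exists_ne_map_eq_of_infinite (x ^ · : ℕ → M)
  wlog hlt : m < n generalizing m n
  · exact this n m hne.symm hmn.symm (by omega)
  have hper : IsPeriodicPt (· * x) (n - m) (x ^ m) := by
    simp only [IsPeriodicPt, IsFixedPt, mul_right_iterate, ← pow_add]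
    rw [Nat.add_sub_cancel' hlt.le]
    exact hmn.symm
  have hp : 0 < n - m := by omega
  -- `t ≥ m` is a multiple of the period `n - m`, so `x ^ (t + t) = x ^ t`.
  set t := (n - m) * (m + 1)
  have hmt : m ≤ t := (Nat.le_succ m).trans (Nat.le_mul_of_pos_left _ hp)
  have := (hper.mul_const (m + 1)).apply_iterate (t - m)
  simp only [IsPeriodicPt, IsFixedPt, mul_right_iterate, ← pow_add,
    Nat.add_sub_cancel' hmt] at this
  exact ⟨x ^ t, by rwa [IsIdempotentElem, ← pow_add], t, by positivity, rfl⟩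

lemma omegaPow_spec [Finite M] (x : M) : ∃ n : ℕ, 0 < n ∧ omegaPow x = x ^ n := by
  rw [omegaPow, dif_pos (exists_isIdempotentElem_pow x)]
  exact (exists_isIdempotentElem_pow x).choose_spec.2

lemma IsIdempotentElem.omegaPow_eq [Finite M] {e : M} (he : IsIdempotentElem e) :
    omegaPow e = e := by
  obtain ⟨n, hn, h⟩ := omegaPow_spec e
  rw [h, he.pow_eq hn.ne']

lemma leJ_trans {x y z : M} : leJ x y → leJ y z → leJ x z := by
  rintro ⟨u, v, rfl⟩ ⟨u', v', rfl⟩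
  exact ⟨u * u', v' * v, by simp only [mul_assoc]⟩

lemma leJ_mul_right (x y : M) : leJ (x * y) x := ⟨1, y, by rw [one_mul]⟩

lemma leJ_mul_left (x y : M) : leJ (x * y) y := ⟨x, 1, by rw [mul_one]⟩

lemma leJ_omegaPow [Finite M] (x : M) : leJ (omegaPow x) x := by
  obtain ⟨n, hn, h⟩ := omegaPow_spec x
  obtain ⟨k, rfl⟩ := Nat.exists_eq_add_one_of_ne_zero hn.ne'
  rw [h, pow_succ]
  exact leJ_mul_left _ _

lemma mul_omegaPow_eq_of_mul_eq [Finite M] {a x : M} (h : a * x = a) : a * omegaPow x = a := by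
  obtain ⟨n, -, hn⟩ := omegaPow_spec x
  simpa [IsFixedPt, mul_right_iterate, ← hn] using (show IsFixedPt (· * x) a from h).iterate n

lemma omegaPow_mul_eq_of_mul_eq [Finite M] {a x : M} (h : x * a = a) : omegaPow x * a = a := by
  obtain ⟨n, -, hn⟩ := omegaPow_spec x
  simpa [IsFixedPt, mul_left_iterate, ← hn] using (show IsFixedPt (x * ·) a from h).iterate n

end OmegaPow

namespace JTrivial

variable {M : Type*} [Monoid M] (hJ : JTrivial M)
include hJ

lemma leJ_antisymm {x y : M} (hxy : leJ x y) (hyx : leJ y x) : x = y := by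
  refine hJ x y (Set.ext fun z => ⟨?_, ?_⟩) <;> rintro ⟨a, b, rfl⟩
  · exact leJ_trans ⟨a, b, rfl⟩ hxy
  · exact leJ_trans ⟨a, b, rfl⟩ hyx

lemma mul_mul_eq_of_eq_mul_mul {e u x v : M} (he : IsIdempotentElem e) (h : e = u * x * v) :
    e * u * x = e := by
  refine hJ.leJ_antisymm ⟨1, u * x, by rw [one_mul, mul_assoc]⟩ ⟨1, v, ?_⟩
  conv_lhs => rw [← he.eq]
  nth_rw 2 [h]
  simp only [one_mul, mul_assoc]

lemma mul_mul_eq_of_eq_mul_mul' {e u x v : M} (he : IsIdempotentElem e) (h : e = u * x * v) :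
    x * v * e = e := by
  refine hJ.leJ_antisymm ⟨x * v, 1, by rw [mul_one]⟩ ⟨u, 1, ?_⟩
  conv_lhs => rw [← he.eq]
  nth_rw 1 [h]
  simp only [mul_one, mul_assoc]

lemma mul_eq_left_of_leJ {e x : M} (he : IsIdempotentElem e) (h : leJ e x) : e * x = e := by
  obtain ⟨u, v, huv⟩ := h
  have hxve := hJ.mul_mul_eq_of_eq_mul_mul' he huv
  simpa using hJ.mul_mul_eq_of_eq_mul_mul he (u := 1) (v := v * e)
    (by rw [one_mul, ← mul_assoc, hxve])

lemma mul_eq_right_of_leJ {e x : M} (he : IsIdempotentElem e) (h : leJ e x) : x * e = e := by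
  obtain ⟨u, v, huv⟩ := h
  have heux := hJ.mul_mul_eq_of_eq_mul_mul he huv
  simpa using hJ.mul_mul_eq_of_eq_mul_mul' he (u := e * u) (v := 1) (by rw [mul_one, heux])

lemma card_filter_leJ_ne_lt [Fintype M] {y z : M} (hzy : leJ z y) (hne : z ≠ y) :
    #{w | leJ w z ∧ w ≠ z} < #{w | leJ w y ∧ w ≠ y} := by
  refine Finset.card_lt_card ⟨fun w hw => ?_, fun hsub => ?_⟩
  · simp only [Finset.mem_filter, Finset.mem_univ, true_and] at hw ⊢
    exact ⟨leJ_trans hw.1 hzy, fun hwy => hne (hJ.leJ_antisymm hzy (hwy ▸ hw.1))⟩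
  · have hz := hsub (by simpa using ⟨hzy, hne⟩)
    simp at hz

variable [Finite M]

lemma mul_omegaPow_self (x : M) : x * omegaPow x = omegaPow x :=
  hJ.mul_eq_right_of_leJ (omegaPow_idem x) (leJ_omegaPow x)

lemma mul_eq_right_iff_omegaPow_mul_eq_right {x y : M} : x * y = y ↔ omegaPow x * y = y :=
  ⟨omegaPow_mul_eq_of_mul_eq, fun h => by rw [← h, ← mul_assoc, hJ.mul_omegaPow_self]⟩

lemma omegaPow_mul (x y : M) : omegaPow (x * y) = omegaPow (omegaPow x * omegaPow y) := by
  set e := omegaPow (x * y)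
  set f := omegaPow (omegaPow x * omegaPow y)
  have he : IsIdempotentElem e := omegaPow_idem _
  have hf : IsIdempotentElem f := omegaPow_idem _
  have hex : e * x = e :=
    hJ.mul_eq_left_of_leJ he (leJ_trans (leJ_omegaPow _) (leJ_mul_right x y))
  have hey : e * y = e :=
    hJ.mul_eq_left_of_leJ he (leJ_trans (leJ_omegaPow _) (leJ_mul_left x y))
  have hfx : f * x = f := hJ.mul_eq_left_of_leJ hf
    (leJ_trans (leJ_omegaPow _) (leJ_trans (leJ_mul_right _ _) (leJ_omegaPow x)))
  have hfy : f * y = f := hJ.mul_eq_left_of_leJ hf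
    (leJ_trans (leJ_omegaPow _) (leJ_trans (leJ_mul_left _ _) (leJ_omegaPow y)))
  have hef : e * f = e := mul_omegaPow_eq_of_mul_eq <| by
    rw [← mul_assoc, mul_omegaPow_eq_of_mul_eq hex, mul_omegaPow_eq_of_mul_eq hey]
  have hfe : f * e = f := mul_omegaPow_eq_of_mul_eq <| by rw [← mul_assoc, hfx, hfy]
  exact hJ.leJ_antisymm ⟨e, 1, by rw [mul_one, hef]⟩ ⟨f, 1, by rw [mul_one, hfe]⟩

variable [CommMonoid {e : M // IsIdempotentElem e}]

noncomputable def omegaPowHom (hmul : ∀ a b : {e : M // IsIdempotentElem e},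
    ((a * b : {e : M // IsIdempotentElem e}) : M) = omegaPow ((a : M) * (b : M))) :
    M →* {e : M // IsIdempotentElem e} where
  toFun x := ⟨omegaPow x, omegaPow_idem x⟩
  map_one' := by
    have h := congrArg Subtype.val (one_mul (⟨1, .one⟩ : {e : M // IsIdempotentElem e}))
    rw [hmul, mul_one, IsIdempotentElem.omegaPow_eq (Subtype.property _)] at h
    exact Subtype.ext (by rw [h]; exact IsIdempotentElem.one.omegaPow_eq)
  map_mul' x y := Subtype.ext <| by rw [hmul]; exact hJ.omegaPow_mul x y

end JTrivial

section IdempotentCommMonoid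

variable {E : Type*} [CommMonoid E] (hE : ∀ e : E, IsIdempotentElem e)
include hE

lemma mul_mul_eq_left_iff {e f g : E} : e * (f * g) = e ↔ e * f = e ∧ e * g = e := by
  refine ⟨fun h => ⟨?_, ?_⟩, fun ⟨hf, hg⟩ => by rw [← mul_assoc, hf, hg]⟩
  · rw [← h, mul_assoc, mul_right_comm f g f, (hE f).eq]
  · rw [← h, mul_assoc, mul_assoc, (hE g).eq]

variable (K : Type*) [Field K]

noncomputable def principalChar (e : E) : E →* K where
  toFun f := if e * f = e then 1 else 0
  map_one' := if_pos (mul_one e)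
  map_mul' f g := by
    simp only [mul_mul_eq_left_iff hE]
    split_ifs <;> simp_all

lemma principalChar_apply (e f : E) :
    principalChar hE K e f = if e * f = e then 1 else 0 := rfl

theorem MonoidAlgebra.jacobson_eq_bot_of_forall_isIdempotentElem :
    Ring.jacobson (MonoidAlgebra K E) = ⊥ := by
  refine eq_bot_iff.2 fun b hb => (Submodule.mem_bot _).2 (MonoidAlgebra.coeff_eq_zero.1 ?_)
  by_contra hb0
  obtain ⟨e, he, hmin⟩ := b.coeff.support.exists_minimalFor (fun e => {f : E | e * f = e})
    (Finsupp.support_nonempty_iff.2 hb0)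
  set χ := MonoidAlgebra.lift K K E (principalChar hE K e)
  have hχb : χ b = b.coeff e := by
    rw [MonoidAlgebra.lift_apply, Finsupp.sum_eq_single e]
    · simp [principalChar_apply, (hE e).eq]
    · intro f hf hfe
      rw [principalChar_apply, if_neg, smul_zero]
      intro hef
      have hsub : {g | e * g = e} ⊆ {g | f * g = f} :=
        hmin (Finsupp.mem_support_iff.2 hf) fun g hg => by
          simp only [Set.mem_ofPred_eq] at hg ⊢
          rw [← hef, mul_assoc, hg]
      have hfe' : f * e = f := hsub (hE e).eq
      exact hfe (by rw [← hfe', mul_comm, hef])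
    · simp
  have hker : b ∈ RingHom.ker χ := by
    have := RingHom.ker_isMaximal_of_surjective χ fun c => ⟨algebraMap K _ c, χ.commutes c⟩
    exact Ring.jacobson_le_of_isMaximal _ hb
  exact Finsupp.mem_support_iff.1 he (hχb ▸ hker)

end IdempotentCommMonoid

theorem Ideal.le_jacobson_bot_of_forall_isNilpotent {R : Type*} [Ring R] {I : Ideal R}
    (hI : ∀ x ∈ I, IsNilpotent x) : I ≤ Ideal.jacobson ⊥ := fun x hx =>
  Ideal.mem_jacobson_iff.2 fun y =>
    have hu := (hI _ (I.mul_mem_left y hx)).isUnit_add_one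
    ⟨↑hu.unit⁻¹, by
      rw [mul_assoc, ← mul_add_one, hu.val_inv_mul, sub_self]
      exact Submodule.zero_mem _⟩

theorem RingHom.ker_eq_jacobson_bot_of_forall_isNilpotent {R S : Type*} [Ring R] [Ring S]
    {f : R →+* S} (hf : Surjective f) (hS : Ring.jacobson S = ⊥)
    (hnil : ∀ x ∈ RingHom.ker f, IsNilpotent x) : RingHom.ker f = Ideal.jacobson ⊥ := by
  refine le_antisymm (Ideal.le_jacobson_bot_of_forall_isNilpotent hnil) ?_
  have : RingHomSurjective f := ⟨hf⟩
  calc Ideal.jacobson ⊥ = Ring.jacobson R := Ideal.jacobson_bot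
    _ ≤ Ideal.comap f (Ring.jacobson S) := Ring.le_comap_jacobson f
    _ = RingHom.ker f := by rw [hS, RingHom.ker_eq_comap_bot]

namespace MonoidAlgebra

variable {R : Type*} [Semiring R] {M : Type*}

lemma coeff_mul_single_self [Mul M] (a : MonoidAlgebra R M) (y : M) (r : R) :
    (a * single y r).coeff y = (a.coeff.sum fun x c => if x * y = y then c else 0) * r := by
  classical
  simp [coeff_mul, Finsupp.sum_mul, ite_mul]

lemma exists_mul_eq_of_mem_support_mul_single [Mul M] {a : MonoidAlgebra R M} {y z : M} {r : R}
    (hz : z ∈ (a * single y r).coeff.support) : ∃ x, x * y = z := by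
  by_contra! h
  exact Finsupp.mem_support_iff.1 hz (coeff_mul_single_of_forall_mul_ne r a h)

lemma mapDomain_surjective {N : Type*} {f : M → N} (hf : Surjective f) :
    Surjective (mapDomain (R := R) f) := fun b =>
  let ⟨a, ha⟩ := Finsupp.mapDomain_surjective hf b.coeff
  ⟨ofCoeff a, congrArg ofCoeff ha⟩

end MonoidAlgebra

namespace JTrivial

open MonoidAlgebra

variable {R : Type*} [Semiring R] {M : Type*} [Monoid M] [Fintype M] (hJ : JTrivial M)
include hJ

theorem isNilpotent_of_forall_sum_stabilizer_eq_zero {a : MonoidAlgebra R M}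
    (ha : ∀ y, (a.coeff.sum fun x c => if x * y = y then c else 0) = 0) : IsNilpotent a := by
  have hsupp : ∀ {y z : M} {r : R},
      z ∈ (a * single y r).coeff.support → leJ z y ∧ z ≠ y := by
    intro y z r hz
    obtain ⟨x, rfl⟩ := exists_mul_eq_of_mem_support_mul_single hz
    refine ⟨leJ_mul_left x y, fun h => ?_⟩
    rw [h, Finsupp.mem_support_iff, coeff_mul_single_self, ha, zero_mul] at hz
    exact hz rfl
  have hpow : ∀ n (y : M) (r : R), #{w | leJ w y ∧ w ≠ y} < n → a ^ n * single y r = 0 := by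
    intro n
    induction n with
    | zero => intro y r h; exact absurd h (Nat.not_lt_zero _)
    | succ n ih =>
      intro y r hy
      rw [pow_succ, mul_assoc, ← sum_coeff_single (a * single y r), Finsupp.sum, Finset.mul_sum]
      refine Finset.sum_eq_zero fun z hz => ih z _ ?_
      have := hJ.card_filter_leJ_ne_lt (hsupp hz).1 (hsupp hz).2
      omega
  exact ⟨Fintype.card M + 1, by
    simpa [← one_def] using hpow _ 1 1 (Nat.lt_succ_of_le (card_le_univ _))⟩

variable [CommMonoid {e : M // IsIdempotentElem e}]
  (hmul : ∀ a b : {e : M // IsIdempotentElem e},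
    ((a * b : {e : M // IsIdempotentElem e}) : M) = omegaPow ((a : M) * (b : M)))

theorem isNilpotent_of_mapDomain_omegaPowHom_eq_zero {a : MonoidAlgebra R M}
    (ha : mapDomain (hJ.omegaPowHom hmul) a = 0) : IsNilpotent a := by
  refine hJ.isNilpotent_of_forall_sum_stabilizer_eq_zero fun y => ?_
  calc (a.coeff.sum fun x c => if x * y = y then c else 0)
      = a.coeff.sum fun x c => if omegaPow x * y = y then c else 0 :=
        Finsupp.sum_congr fun x _ => by
          simp only [hJ.mul_eq_right_iff_omegaPow_mul_eq_right (x := x)]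
    _ = (Finsupp.mapDomain (hJ.omegaPowHom hmul) a.coeff).sum
          fun e c => if (e : M) * y = y then c else 0 := by
        rw [Finsupp.sum_mapDomain_index (by simp) fun _ _ _ => ite_add_zero]
        rfl
    _ = 0 := by rw [show Finsupp.mapDomain _ a.coeff = 0 from congrArg coeff ha]; simp

end JTrivial

theorem semisimple_quotient_iso_general (K : Type*) [Field K] {M : Type*} [Monoid M] [Fintype M]
    (hJ : JTrivial M)
    [instE : CommMonoid {e : M // IsIdempotentElem e}]
    (hmul : ∀ a b : {e : M // IsIdempotentElem e},
      ((a * b : {e : M // IsIdempotentElem e}) : M) = omegaPow ((a : M) * (b : M))) :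
    ∃ Φ : MonoidAlgebra K M →ₐ[K] MonoidAlgebra K {e : M // IsIdempotentElem e},
      (∀ x : M, Φ (MonoidAlgebra.of K M x)
          = MonoidAlgebra.of K {e : M // IsIdempotentElem e}
              ⟨omegaPow x, omegaPow_idem x⟩) ∧
      Function.Surjective Φ ∧
      RingHom.ker (Φ : MonoidAlgebra K M →+* MonoidAlgebra K {e : M // IsIdempotentElem e})
        = Ideal.jacobson (⊥ : Ideal (MonoidAlgebra K M)) := by
  set ψ := hJ.omegaPowHom hmul
  have hψ : Surjective ψ := fun e => ⟨e, Subtype.ext e.2.omegaPow_eq⟩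
  have hE : ∀ e : {e : M // IsIdempotentElem e}, IsIdempotentElem e := fun e =>
    Subtype.ext (by rw [hmul, e.2.eq, e.2.omegaPow_eq])
  have hΦ : Surjective (MonoidAlgebra.mapDomainAlgHom K K ψ) :=
    MonoidAlgebra.mapDomain_surjective hψ
  refine ⟨_, fun x => MonoidAlgebra.mapDomain_single, hΦ, ?_⟩
  exact RingHom.ker_eq_jacobson_bot_of_forall_isNilpotent hΦ
    (MonoidAlgebra.jacobson_eq_bot_of_forall_isIdempotentElem hE K)
    fun a ha => hJ.isNilpotent_of_mapDomain_omegaPowHom_eq_zero hmul ha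

/-- Let `K` be a field, `M` a finite `J`-trivial monoid, and let `E` be the commutative monoid
of idempotents of `M` under `e ⋆ f = (e * f)^ω`.  The `K`-linear map `Φ : K[M] → K[E]`
determined on the basis by `Φ(x) = x^ω` is a surjective algebra homomorphism whose kernel is
the Jacobson radical of `K[M]`; in particular it induces `K[M]/rad ≅ K[E]`. -/
theorem semisimple_quotient_iso (K : Type*) [Field K] {M : Type*} [Monoid M] [Fintype M]
    (hJ : JTrivial M)
    [instE : CommMonoid {e : M // IsIdempotentElem e}]
    (hmul : ∀ a b : {e : M // IsIdempotentElem e},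
      ((a * b : {e : M // IsIdempotentElem e}) : M) = omegaPow ((a : M) * (b : M)))
    (hone : ((1 : {e : M // IsIdempotentElem e}) : M) = 1) :
    ∃ Φ : MonoidAlgebra K M →ₐ[K] MonoidAlgebra K {e : M // IsIdempotentElem e},
      (∀ x : M, Φ (MonoidAlgebra.of K M x)
          = MonoidAlgebra.of K {e : M // IsIdempotentElem e}
              ⟨omegaPow x, omegaPow_idem x⟩) ∧
      Function.Surjective Φ ∧
      RingHom.ker (Φ : MonoidAlgebra K M →+* MonoidAlgebra K {e : M // IsIdempotentElem e})
        = Ideal.jacobson (⊥ : Ideal (MonoidAlgebra K M)) :=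
  semisimple_quotient_iso_general K hJ (instE := instE) hmul
end

section
/- Let M be a finite J-trivial monoid and x ∈ M, and set e := lfix(x) and f := rfix(x). Then the following are equivalent: (1) x admits a non-trivial factorization, i.e., there exist u, v ∈ M with x = u·v, e·u ≠ e and v·f ≠ f; (2) x admits a compatible factorization, i.e., there exist u, v ∈ M with x = u·v such that u and v are not idempotent, lfix(u) = e, rfix(v) = f, and rfix(u) = lfix(v). -/
open Classical

/-- `lfix x`: the `≤_J`-minimum of the idempotents `e` with `e * x = x`
(it exists in a finite `J`-trivial monoid). -/
noncomputable def lfixF {M : Type*} [Monoid M] (x : M) : M :=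
  if h : ∃ e : M, (IsIdempotentElem e ∧ e * x = x) ∧
      ∀ f : M, IsIdempotentElem f → f * x = x → leJ e f
  then h.choose else 1

/-- `rfix x`: the `≤_J`-minimum of the idempotents `e` with `x * e = x`
(it exists in a finite `J`-trivial monoid). -/
noncomputable def rfixF {M : Type*} [Monoid M] (x : M) : M :=
  if h : ∃ e : M, (IsIdempotentElem e ∧ x * e = x) ∧
      ∀ f : M, IsIdempotentElem f → x * f = x → leJ e f
  then h.choose else 1

/-!
Normalising a nontrivial factorization `x = u * v` to `(e * u) * (v * f)` gives one with
`e * u = u ≠ e` and `v * f = v ≠ f`. This shape survives replacing `v` by `rfix(u) * v` and `u`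
by `u * lfix(v)`; each replacement moves a factor strictly down in the `J`-order unless it leaves
it unchanged. So a normalised factorization with `J`-minimal factors is fixed by both moves,
i.e. `rfix(u) * v = v` and `u * lfix(v) = u`, which by minimality of `lfix` and `rfix` forces
`rfix(u) = lfix(v)`, `lfix(u) = e` and `rfix(v) = f`. Conversely, if `lfix(u) = e` and `e * u = e`,
then `u = e * u = e` is idempotent.
-/

section

variable {M : Type*} [Monoid M]

theorem leJ_refl (x : M) : leJ x x := ⟨1, 1, by simp⟩

theorem leJ_trans_s13 {a b c : M} (hab : leJ a b) (hbc : leJ b c) : leJ a c := by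
  obtain ⟨u, v, rfl⟩ := hab
  obtain ⟨s, t, rfl⟩ := hbc
  exact ⟨u * s, t * v, by simp only [mul_assoc]⟩

theorem leJ_mul_left_s13 (a b : M) : leJ (a * b) b := ⟨a, 1, by rw [mul_one]⟩

theorem leJ_mul_right_s13 (a b : M) : leJ (a * b) a := ⟨1, b, by rw [one_mul]⟩

theorem leJ_antisymm (hJ : JTrivial M) {a b : M} (hab : leJ a b) (hba : leJ b a) : a = b := by
  have ideal_le {x y : M} (hxy : leJ x y) :
      {z : M | ∃ u v : M, z = u * x * v} ⊆ {z : M | ∃ u v : M, z = u * y * v} := by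
    rintro _ ⟨p, q, rfl⟩
    obtain ⟨s, t, rfl⟩ := hxy
    exact ⟨p * s, t * q, by simp only [mul_assoc]⟩
  exact hJ a b ((ideal_le hab).antisymm (ideal_le hba))

theorem Submonoid.exists_forall_leJ [Finite M] (S : Submonoid M) : ∃ p ∈ S, ∀ f ∈ S, leJ p f := by
  set l := (Set.toFinite (S : Set M)).toFinset.toList
  have mem_l {f : M} : f ∈ l ↔ f ∈ S := by simp [l]
  refine ⟨l.prod, S.list_prod_mem fun f hf => mem_l.1 hf, fun f hf => ?_⟩
  obtain ⟨s, t, hl⟩ := List.append_of_mem (mem_l.2 hf)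
  exact ⟨s.prod, t.prod, by rw [hl, List.prod_append, List.prod_cons, mul_assoc]⟩

theorem Submonoid.exists_isIdempotentElem_forall_leJ [Finite M] (S : Submonoid M) :
    ∃ e ∈ S, IsIdempotentElem e ∧ ∀ f ∈ S, leJ e f := by
  let _ : TopologicalSpace M := ⊥
  have : DiscreteTopology M := ⟨rfl⟩
  -- the elements of `S` below all of `S` form a nonempty finite subsemigroup
  obtain ⟨e, ⟨heS, he⟩, hidem⟩ := exists_idempotent_in_compact_subsemigroup
    (fun _ => continuous_of_discreteTopology) {z | z ∈ S ∧ ∀ f ∈ S, leJ z f}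
    S.exists_forall_leJ (Set.toFinite _).isCompact
    fun a ha b hb => ⟨S.mul_mem ha.1 hb.1, fun f hf => leJ_trans_s13 (leJ_mul_right_s13 a b) (ha.2 f hf)⟩
  exact ⟨e, heS, hidem, he⟩

def leftFixers (x : M) : Submonoid M where
  carrier := {e | e * x = x}
  one_mem' := one_mul x
  mul_mem' {a b} ha hb := by rw [Set.mem_ofPred_eq, mul_assoc, hb, ha]

def rightFixers (x : M) : Submonoid M where
  carrier := {e | x * e = x}
  one_mem' := mul_one x
  mul_mem' {a b} ha hb := by rw [Set.mem_ofPred_eq, ← mul_assoc, ha, hb]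

section Fix

variable [Finite M]

theorem lfixF_spec (x : M) :
    (IsIdempotentElem (lfixF x) ∧ lfixF x * x = x) ∧
      ∀ f : M, IsIdempotentElem f → f * x = x → leJ (lfixF x) f := by
  obtain ⟨e, hex, he, hmin⟩ := (leftFixers x).exists_isIdempotentElem_forall_leJ
  have h : ∃ e : M, (IsIdempotentElem e ∧ e * x = x) ∧
      ∀ f : M, IsIdempotentElem f → f * x = x → leJ e f :=
    ⟨e, ⟨he, hex⟩, fun f _ hfx => hmin f hfx⟩
  rw [lfixF, dif_pos h]
  exact h.choose_spec

theorem rfixF_spec (x : M) :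
    (IsIdempotentElem (rfixF x) ∧ x * rfixF x = x) ∧
      ∀ f : M, IsIdempotentElem f → x * f = x → leJ (rfixF x) f := by
  obtain ⟨e, hex, he, hmin⟩ := (rightFixers x).exists_isIdempotentElem_forall_leJ
  have h : ∃ e : M, (IsIdempotentElem e ∧ x * e = x) ∧
      ∀ f : M, IsIdempotentElem f → x * f = x → leJ e f :=
    ⟨e, ⟨he, hex⟩, fun f _ hxf => hmin f hxf⟩
  rw [rfixF, dif_pos h]
  exact h.choose_spec

theorem isIdempotentElem_lfixF (x : M) : IsIdempotentElem (lfixF x) := (lfixF_spec x).1.1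

theorem lfixF_mul (x : M) : lfixF x * x = x := (lfixF_spec x).1.2

theorem lfixF_leJ {x f : M} (hf : IsIdempotentElem f) (hfx : f * x = x) : leJ (lfixF x) f :=
  (lfixF_spec x).2 f hf hfx

theorem isIdempotentElem_rfixF (x : M) : IsIdempotentElem (rfixF x) := (rfixF_spec x).1.1

theorem mul_rfixF (x : M) : x * rfixF x = x := (rfixF_spec x).1.2

theorem rfixF_leJ {x f : M} (hf : IsIdempotentElem f) (hxf : x * f = x) : leJ (rfixF x) f :=
  (rfixF_spec x).2 f hf hxf

variable (hJ : JTrivial M)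
include hJ

theorem IsIdempotentElem.lfixF_eq {u : M} (hu : IsIdempotentElem u) : lfixF u = u :=
  leJ_antisymm hJ (lfixF_leJ hu hu) (by simpa only [lfixF_mul] using leJ_mul_right_s13 (lfixF u) u)

theorem IsIdempotentElem.rfixF_eq {v : M} (hv : IsIdempotentElem v) : rfixF v = v :=
  leJ_antisymm hJ (rfixF_leJ hv hv) (by simpa only [mul_rfixF] using leJ_mul_left_s13 v (rfixF v))

theorem lfixF_eq_lfixF_mul {u v : M} (hu : lfixF (u * v) * u = u) : lfixF u = lfixF (u * v) :=
  leJ_antisymm hJ (lfixF_leJ (isIdempotentElem_lfixF _) hu)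
    (lfixF_leJ (isIdempotentElem_lfixF u) (by rw [← mul_assoc, lfixF_mul]))

theorem rfixF_eq_rfixF_mul {u v : M} (hv : v * rfixF (u * v) = v) : rfixF v = rfixF (u * v) :=
  leJ_antisymm hJ (rfixF_leJ (isIdempotentElem_rfixF _) hv)
    (rfixF_leJ (isIdempotentElem_rfixF v) (by rw [mul_assoc, mul_rfixF]))

theorem rfixF_eq_lfixF {u v : M} (hu : u * lfixF v = u) (hv : rfixF u * v = v) :
    rfixF u = lfixF v :=
  leJ_antisymm hJ (rfixF_leJ (isIdempotentElem_lfixF v) hu)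
    (lfixF_leJ (isIdempotentElem_rfixF u) hv)

end Fix

def IsNontrivialFactorization (x u v : M) : Prop :=
  x = u * v ∧ lfixF x * u ≠ lfixF x ∧ v * rfixF x ≠ rfixF x

def IsNormalizedFactorization (x u v : M) : Prop :=
  x = u * v ∧ lfixF x * u = u ∧ v * rfixF x = v ∧ u ≠ lfixF x ∧ v ≠ rfixF x

def IsCompatibleFactorization (x u v : M) : Prop :=
  x = u * v ∧ ¬ IsIdempotentElem u ∧ ¬ IsIdempotentElem v ∧
    lfixF u = lfixF x ∧ rfixF v = rfixF x ∧ rfixF u = lfixF v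

noncomputable def jRank (u : M) : ℕ := {z | leJ z u}.ncard

section Factorization

variable {x u v a : M}

theorem IsNormalizedFactorization.mul_left (hJ : JTrivial M)
    (h : IsNormalizedFactorization x u v) (ha : u * a = u) :
    IsNormalizedFactorization x u (a * v) := by
  obtain ⟨hx, heu, hvf, hue, hvf'⟩ := h
  refine ⟨by rw [hx, ← mul_assoc, ha], heu, by rw [mul_assoc, hvf], hue, fun hav => hvf' ?_⟩
  exact leJ_antisymm hJ (by simpa only [hvf] using leJ_mul_left_s13 v (rfixF x))
    (by simpa only [hav] using leJ_mul_left_s13 a v)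

theorem IsNormalizedFactorization.mul_right (hJ : JTrivial M)
    (h : IsNormalizedFactorization x u v) (ha : a * v = v) :
    IsNormalizedFactorization x (u * a) v := by
  obtain ⟨hx, heu, hvf, hue, hvf'⟩ := h
  refine ⟨by rw [hx, mul_assoc, ha], by rw [← mul_assoc, heu], hvf, fun hua => hue ?_, hvf'⟩
  exact leJ_antisymm hJ (by simpa only [heu] using leJ_mul_right_s13 (lfixF x) u)
    (by simpa only [hua] using leJ_mul_right_s13 u a)

variable [Finite M]

theorem IsNontrivialFactorization.normalize (h : IsNontrivialFactorization x u v) :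
    IsNormalizedFactorization x (lfixF x * u) (v * rfixF x) := by
  obtain ⟨hx, hu, hv⟩ := h
  refine ⟨?_, by rw [← mul_assoc, isIdempotentElem_lfixF x],
    by rw [mul_assoc, isIdempotentElem_rfixF x], hu, hv⟩
  calc x = lfixF x * x * rfixF x := by rw [lfixF_mul, mul_rfixF]
    _ = lfixF x * u * (v * rfixF x) := by rw [hx, mul_assoc, mul_assoc, mul_assoc]

theorem IsCompatibleFactorization.isNontrivialFactorization (h : IsCompatibleFactorization x u v) :
    IsNontrivialFactorization x u v := by
  obtain ⟨hx, hu, hv, hlu, hrv, -⟩ := h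
  refine ⟨hx, fun heu => hu ?_, fun hvf => hv ?_⟩
  · have hfix : lfixF x * u = u := hlu ▸ lfixF_mul u
    rw [hfix.symm.trans heu]
    exact isIdempotentElem_lfixF x
  · have hfix : v * rfixF x = v := hrv ▸ mul_rfixF v
    rw [hfix.symm.trans hvf]
    exact isIdempotentElem_rfixF x

variable (hJ : JTrivial M)
include hJ

theorem jRank_lt_jRank {a b : M} (hab : leJ a b) (hne : a ≠ b) : jRank a < jRank b :=
  Set.ncard_lt_ncard <| (Set.ssubset_iff_of_subset fun _ hz => leJ_trans_s13 hz hab).2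
    ⟨b, leJ_refl b, fun hba => hne (leJ_antisymm hJ hab hba)⟩

theorem IsNormalizedFactorization.isCompatibleFactorization (h : IsNormalizedFactorization x u v)
    (hu : u * lfixF v = u) (hv : rfixF u * v = v) : IsCompatibleFactorization x u v := by
  obtain ⟨rfl, heu, hvf, hue, hvf'⟩ := h
  have hlu := lfixF_eq_lfixF_mul hJ heu
  have hrv := rfixF_eq_rfixF_mul hJ hvf
  exact ⟨rfl, fun hidem => hue ((hidem.lfixF_eq hJ).symm.trans hlu),
    fun hidem => hvf' ((hidem.rfixF_eq hJ).symm.trans hrv), hlu, hrv, rfixF_eq_lfixF hJ hu hv⟩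

theorem exists_isCompatibleFactorization {u₀ v₀ : M} (h : IsNormalizedFactorization x u₀ v₀) :
    ∃ u v : M, IsCompatibleFactorization x u v := by
  obtain ⟨⟨u, v⟩, hmem, hmin⟩ := Set.exists_min_image
    {p : M × M | IsNormalizedFactorization x p.1 p.2} (fun p => jRank p.1 + jRank p.2)
    (Set.toFinite _) ⟨(u₀, v₀), h⟩
  refine ⟨u, v, hmem.isCompatibleFactorization hJ ?_ ?_⟩
  · by_contra hne
    have hle := hmin (u * lfixF v, v) (hmem.mul_right hJ (lfixF_mul v))
    have hlt := jRank_lt_jRank hJ (leJ_mul_right_s13 u (lfixF v)) hne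
    dsimp only at hle
    omega
  · by_contra hne
    have hle := hmin (u, rfixF u * v) (hmem.mul_left hJ (mul_rfixF u))
    have hlt := jRank_lt_jRank hJ (leJ_mul_left_s13 (rfixF u) v) hne
    dsimp only at hle
    omega

end Factorization

end

/-- In a finite `J`-trivial monoid, an element `x` admits a non-trivial factorization
if and only if it admits a compatible one. -/
theorem nontrivial_iff_compatible_factorization {M : Type*} [Monoid M] [Fintype M]
    (hJ : JTrivial M) (x : M) :
    (∃ u v : M, x = u * v ∧ lfixF x * u ≠ lfixF x ∧ v * rfixF x ≠ rfixF x) ↔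
    (∃ u v : M, x = u * v ∧ ¬ IsIdempotentElem u ∧ ¬ IsIdempotentElem v ∧
      lfixF u = lfixF x ∧ rfixF v = rfixF x ∧ rfixF u = lfixF v) := by
  constructor
  · rintro ⟨u, v, h⟩
    exact exists_isCompatibleFactorization hJ (IsNontrivialFactorization.normalize h)
  · rintro ⟨u, v, h⟩
    exact ⟨u, v, IsCompatibleFactorization.isNontrivialFactorization h⟩
end
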